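/- arXiv:2504.18052 — 13 statements merged into one kernel-verified Lean document; each statement's English description precedes it below -/
import Mathlib

section
/- Every A_3-associative algebra is Lie-admissible: if (A,·) satisfies the A_3-associative law, then the commutator bracket [x,y] = x·y − y·x satisfies the Jacobi identity [[x,y],z] + [[y,z],x] + [[z,x],y] = 0, so (A,[·,·]) is a Lie algebra. -/
/-- Every A₃-associative algebra is Lie-admissible: the commutator bracket
satisfies the Jacobi identity. -/
theorem A3_is_LieAdmissible {K A : Type*} [Field K] [CharZero K]
    [AddCommGroup A] [Module K A]
    (m : A →ₗ[K] A →ₗ[K] A)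
    (hA3 : ∀ x y z : A,
      m (m x y) z + m (m y z) x + m (m z x) y
        = m x (m y z) + m y (m z x) + m z (m x y))
    (bracket : A → A → A)
    (hbracket : ∀ x y : A, bracket x y = m x y - m y x) :
    ∀ x y z : A,
      bracket (bracket x y) z + bracket (bracket y z) x + bracket (bracket z x) y = 0 := by
  intro x y z
  simp only [hbracket, map_sub, LinearMap.sub_apply]
  linear_combination (norm := abel) hA3 x y z - hA3 y x z
end

section
/- Let (A,·) be an A_3-associative algebra with representation (l,r,V), and let l*,r*: A → End(V*) be the dual maps defined by ⟨l*(x)u*, v⟩ = ⟨u*, l(x)v⟩ and ⟨r*(x)u*, v⟩ = ⟨u*, r(x)v⟩. Then (r*, l*, V*) is a representation of (A,·) if and only if r(y)l(x)v − l(x)r(y)v + r(x)l(y)v − l(y)r(x)v = 0 for all x,y ∈ A, v ∈ V. -/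
/-- For a representation (l,r,V) of an A₃-associative algebra, the dual triple
(r*, l*, V*) is a representation iff r(y)l(x) − l(x)r(y) + r(x)l(y) − l(y)r(x) = 0. -/
theorem dualRep_iff {K A V : Type*} [Field K] [AddCommGroup A] [Module K A]
    [AddCommGroup V] [Module K V] [FiniteDimensional K V]
    (m : A →ₗ[K] A →ₗ[K] A)
    (hA3 : ∀ x y z : A,
      m (m x y) z + m (m y z) x + m (m z x) y
        = m x (m y z) + m y (m z x) + m z (m x y))
    (l r : A →ₗ[K] Module.End K V)
    (hrep : ∀ (x y : A) (v : V),
      l (m x y) v - r (m x y) v + r x (l y v) - l x (l y v) + r y (r x v) - l y (r x v) = 0) :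
    (∀ (x y : A) (u : Module.Dual K V),
      (r (m x y)).dualMap u - (l (m x y)).dualMap u
        + (l x).dualMap ((r y).dualMap u) - (r x).dualMap ((r y).dualMap u)
        + (l y).dualMap ((l x).dualMap u) - (r y).dualMap ((l x).dualMap u) = 0)
    ↔ (∀ (x y : A) (v : V),
      r y (l x v) - l x (r y v) + r x (l y v) - l y (r x v) = 0) := by
  have key : ∀ (x y : A) (u : Module.Dual K V) (v : V),
      ((r (m x y)).dualMap u - (l (m x y)).dualMap u
        + (l x).dualMap ((r y).dualMap u) - (r x).dualMap ((r y).dualMap u)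
        + (l y).dualMap ((l x).dualMap u) - (r y).dualMap ((l x).dualMap u)) v
      = u (r y (l x v) - l x (r y v) + r x (l y v) - l y (r x v)) := by
    intro x y u v
    have hv : r (m x y) v - l (m x y) v + r y (l x v) - r y (r x v) + l x (l y v)
        - l x (r y v) = r y (l x v) - l x (r y v) + r x (l y v) - l y (r x v) := by
      have h := hrep x y v
      linear_combination (norm := abel) -h
    rw [← hv]
    simp [LinearMap.dualMap_apply, map_sub, map_add]
  constructor
  · intro h x y v
    have huv : ∀ u : Module.Dual K V,
        u (r y (l x v) - l x (r y v) + r x (l y v) - l y (r x v)) = 0 := by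
      intro u
      rw [← key x y u v, h x y u]
      rfl
    exact (Module.forall_dual_apply_eq_zero_iff K _).mp huv
  · intro h x y u
    ext v
    rw [key x y u v, h x y v, map_zero]
    rfl
end

section
/- Let (l,r,V) be an admissible representation of an A_3-associative algebra (A,·) (i.e., additionally r(y)l(x) − l(x)r(y) + r(x)l(y) − l(y)r(x) = 0 on V for all x,y). Then the dual representation (r*, l*, V*), defined by ⟨l*(x)u*,v⟩ = ⟨u*, l(x)v⟩ and ⟨r*(x)u*,v⟩ = ⟨u*, r(x)v⟩, is itself an admissible representation. -/
/-- The dual of an admissible representation of an A₃-associative algebra is an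
admissible representation. -/
theorem dual_of_admissibleRep {K A V : Type*} [Field K] [AddCommGroup A] [Module K A]
    [AddCommGroup V] [Module K V] [FiniteDimensional K V]
    (m : A →ₗ[K] A →ₗ[K] A)
    (hA3 : ∀ x y z : A,
      m (m x y) z + m (m y z) x + m (m z x) y
        = m x (m y z) + m y (m z x) + m z (m x y))
    (l r : A →ₗ[K] Module.End K V)
    (hrep : ∀ (x y : A) (v : V),
      l (m x y) v - r (m x y) v + r x (l y v) - l x (l y v) + r y (r x v) - l y (r x v) = 0)
    (hadm : ∀ (x y : A) (v : V),
      r y (l x v) - l x (r y v) + r x (l y v) - l y (r x v) = 0) :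
    (∀ (x y : A) (u : Module.Dual K V),
      (r (m x y)).dualMap u - (l (m x y)).dualMap u
        + (l x).dualMap ((r y).dualMap u) - (r x).dualMap ((r y).dualMap u)
        + (l y).dualMap ((l x).dualMap u) - (r y).dualMap ((l x).dualMap u) = 0)
    ∧ (∀ (x y : A) (u : Module.Dual K V),
      (l y).dualMap ((r x).dualMap u) - (r x).dualMap ((l y).dualMap u)
        + (l x).dualMap ((r y).dualMap u) - (r y).dualMap ((l x).dualMap u) = 0) := by
  constructor <;> intro x y u <;> ext v <;>
    have h1 := congrArg u (hrep x y v) <;>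
    have h2 := congrArg u (hadm x y v) <;>
    simp only [map_add, map_sub, map_zero] at h1 h2 <;>
    simp only [LinearMap.sub_apply, LinearMap.add_apply, LinearMap.dualMap_apply,
      LinearMap.zero_apply] <;>
    first
    | linear_combination h2 - h1
    | linear_combination h2
end

section
/- If a bilinear multiplication · on a vector space A makes (A,·) both an admissible A_3-associative algebra and a left-symmetric algebra, then (A,·) is associative: (x·z)·y = x·(z·y) for all x,y,z ∈ A. -/
/-- An algebra that is both an admissible A₃-associative algebra and a
left-symmetric algebra is associative. -/
theorem admissibleA3_leftSymmetric_assoc {K A : Type*} [Field K] [CharZero K]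
    [AddCommGroup A] [Module K A]
    (m : A →ₗ[K] A →ₗ[K] A)
    (hA3 : ∀ x y z : A,
      m (m x y) z + m (m y z) x + m (m z x) y
        = m x (m y z) + m y (m z x) + m z (m x y))
    (hadm : ∀ x y z : A,
      m (m x z) y - m x (m z y) = m y (m z x) - m (m y z) x)
    (hls : ∀ x y z : A,
      m (m x y) z - m x (m y z) = m (m y x) z - m y (m x z)) :
    ∀ x y z : A, m (m x z) y = m x (m z y) := by
  have key : ∀ u v w : A, m (m u v) w = m u (m v w) := by
    intro u v w
    have e : m (m u v) w - m u (m v w) = -(m (m u v) w - m u (m v w)) := by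
      calc m (m u v) w - m u (m v w)
          = m (m v u) w - m v (m u w) := hls u v w
        _ = -(m (m w u) v - m w (m u v)) := by rw [hadm v w u]; abel
        _ = -(m (m u w) v - m u (m w v)) := by rw [hls w u v]
        _ = -(-(m (m v w) u - m v (m w u))) := by rw [hadm u v w]; abel
        _ = -(-(m (m w v) u - m w (m v u))) := by rw [hls v w u]
        _ = -(m (m u v) w - m u (m v w)) := by rw [hadm w u v]; abel
    have h2 : (2 : K) • (m (m u v) w - m u (m v w)) = 0 := by
      rw [two_smul]
      exact add_eq_zero_iff_eq_neg.mpr e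
    have h0 : (m (m u v) w - m u (m v w)) = 0 :=
      (smul_eq_zero.mp h2).resolve_left two_ne_zero
    exact sub_eq_zero.mp h0
  intro x y z
  exact key x z y
end

section
/- If a bilinear multiplication · on a vector space A makes (A,·) both an admissible A_3-associative algebra and a right-symmetric algebra, then (A,·) is associative: (y·x)·z = y·(x·z) for all x,y,z ∈ A. -/
/-- An algebra that is both an admissible A₃-associative algebra and a
right-symmetric algebra is associative. -/
theorem admissibleA3_rightSymmetric_assoc {K A : Type*} [Field K] [CharZero K]
    [AddCommGroup A] [Module K A]
    (m : A →ₗ[K] A →ₗ[K] A)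
    (hA3 : ∀ x y z : A,
      m (m x y) z + m (m y z) x + m (m z x) y
        = m x (m y z) + m y (m z x) + m z (m x y))
    (hadm : ∀ x y z : A,
      m (m x z) y - m x (m z y) = m y (m z x) - m (m y z) x)
    (hrs : ∀ x y z : A,
      m (m x y) z - m x (m y z) = m (m x z) y - m x (m z y)) :
    ∀ x y z : A, m (m y x) z = m y (m x z) := by
  set a : A → A → A → A := fun p q r => m (m p q) r - m p (m q r) with ha
  have hanti : ∀ p q r : A, a p q r = -(a r q p) := by
    intro p q r
    have h := hadm p r q
    simp only [ha, neg_sub]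
    rw [h]
  have hsym : ∀ p q r : A, a p q r = a p r q := hrs
  have hzero : ∀ p q r : A, a p q r = 0 := by
    intro p q r
    have h : a p q r = -(a p q r) := by
      calc a p q r = -(a r q p) := hanti p q r
        _ = -(a r p q) := by rw [hsym r q p]
        _ = a q p r := by rw [hanti q p r]
        _ = a q r p := hsym q p r
        _ = -(a p r q) := hanti q r p
        _ = -(a p q r) := by rw [hsym p q r]
    have h2 : a p q r + a p q r = 0 := by
      nth_rewrite 1 [h]; simp
    have h3 : (2 : K) • a p q r = 0 := by rw [two_smul]; exact h2
    have h4 : (2 : K) ≠ 0 := two_ne_zero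
    rcases smul_eq_zero.mp h3 with h | h
    · exact absurd h h4
    · exact h
  intro x y z
  have := hzero y x z
  simp only [ha] at this
  exact sub_eq_zero.mp this
end

section
/- Let (A,·) and (B,∘) be A_3-associative algebras with linear maps l_A,r_A: A → End(B) and l_B,r_B: B → End(A). Define the product on A⊕B by (x+a)*(y+b) = x·y + l_B(a)y + r_B(b)x + a∘b + l_A(x)b + r_A(y)a. Then (A⊕B,*) is an A_3-associative algebra if and only if (l_A,r_A,B) is a representation of (A,·), (l_B,r_B,A) is a representation of (B,∘), and two compatibility conditions hold: (r_B − l_B)(a)(x·y) = x·(r_B(a)y) − (r_B(a)y)·x + y·(l_B(a)x) − (l_B(a)x)·y + (r_B − l_B)(l_A(y)a)x + (r_B − l_B)(r_A(x)a)y, and the symmetric condition with the roles of A and B exchanged. -/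
/-- Matched pairs of A₃-associative algebras: the product on A ⊕ B is
A₃-associative iff (l_A,r_A,B), (l_B,r_B,A) are representations and the two
compatibility conditions hold. -/
theorem matchedPair_iff {K A B : Type*} [Field K] [AddCommGroup A] [Module K A]
    [AddCommGroup B] [Module K B]
    (md : A →ₗ[K] A →ₗ[K] A) (mc : B →ₗ[K] B →ₗ[K] B)
    (hA : ∀ x y z : A,
      md (md x y) z + md (md y z) x + md (md z x) y
        = md x (md y z) + md y (md z x) + md z (md x y))
    (hB : ∀ a b c : B,
      mc (mc a b) c + mc (mc b c) a + mc (mc c a) b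
        = mc a (mc b c) + mc b (mc c a) + mc c (mc a b))
    (lA rA : A →ₗ[K] Module.End K B) (lB rB : B →ₗ[K] Module.End K A)
    (star : A × B → A × B → A × B)
    (hstar : ∀ p q : A × B, star p q =
      (md p.1 q.1 + lB p.2 q.1 + rB q.2 p.1,
       mc p.2 q.2 + lA p.1 q.2 + rA q.1 p.2)) :
    (∀ p q s : A × B,
      star (star p q) s + star (star q s) p + star (star s p) q
        = star p (star q s) + star q (star s p) + star s (star p q))
    ↔ ((∀ (x y : A) (b : B),
          lA (md x y) b - rA (md x y) b + rA x (lA y b) - lA x (lA y b)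
            + rA y (rA x b) - lA y (rA x b) = 0)
      ∧ (∀ (a b : B) (x : A),
          lB (mc a b) x - rB (mc a b) x + rB a (lB b x) - lB a (lB b x)
            + rB b (rB a x) - lB b (rB a x) = 0)
      ∧ (∀ (a : B) (x y : A),
          rB a (md x y) - lB a (md x y)
            = md x (rB a y) - md (rB a y) x + md y (lB a x) - md (lB a x) y
              + rB (lA y a) x - lB (lA y a) x + rB (rA x a) y - lB (rA x a) y)
      ∧ (∀ (x : A) (a b : B),
          rA x (mc a b) - lA x (mc a b)
            = mc a (rA x b) - mc (rA x b) a + mc b (lA x a) - mc (lA x a) b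
              + rA (lB b x) a - lA (lB b x) a + rA (rB a x) b - lA (rB a x) b)) := by
  constructor
  · intro h
    refine ⟨fun x y b => ?_, fun a b x => ?_, fun a x y => ?_, fun x a b => ?_⟩
    · have := congrArg Prod.snd (h (x,0) (y,0) (0,b))
      simp [hstar] at this
      linear_combination (norm := abel) this
    · have := congrArg Prod.fst (h (0,a) (0,b) (x,0))
      simp [hstar] at this
      linear_combination (norm := abel) this
    · have := congrArg Prod.fst (h (x,0) (y,0) (0,a))
      simp [hstar] at this
      linear_combination (norm := abel) this
    · have := congrArg Prod.snd (h (0,a) (0,b) (x,0))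
      simp [hstar] at this
      linear_combination (norm := abel) this
  · rintro ⟨h1, h2, h3, h4⟩ p q s
    have e1 : (star (star p q) s + star (star q s) p + star (star s p) q).1
        = (star p (star q s) + star q (star s p) + star s (star p q)).1 := by
      simp only [hstar, Prod.fst_add, Prod.snd_add, map_add, LinearMap.add_apply]
      linear_combination (norm := abel) hA p.1 q.1 s.1 + h2 p.2 q.2 s.1
        + h2 q.2 s.2 p.1 + h2 s.2 p.2 q.1 + h3 s.2 p.1 q.1 + h3 p.2 q.1 s.1
        + h3 q.2 s.1 p.1
    have e2 : (star (star p q) s + star (star q s) p + star (star s p) q).2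
        = (star p (star q s) + star q (star s p) + star s (star p q)).2 := by
      simp only [hstar, Prod.fst_add, Prod.snd_add, map_add, LinearMap.add_apply]
      linear_combination (norm := abel) hB p.2 q.2 s.2 + h1 p.1 q.1 s.2
        + h1 q.1 s.1 p.2 + h1 s.1 p.1 q.2 + h4 s.1 p.2 q.2 + h4 p.1 q.2 s.2
        + h4 q.1 s.2 p.2
    exact Prod.ext e1 e2
end

section
/- Let (A,·) be an A_3-associative algebra, V a vector space, and l,r: A → End(V) linear maps. Then (l,r,V) is a representation of (A,·) if and only if the product on A⊕V defined by (x+u)*(y+v) = x·y + l(x)v + r(y)u makes A⊕V an A_3-associative algebra (the semi-direct product). -/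
/-- (l,r,V) is a representation of an A₃-associative algebra (A,·) iff the
semi-direct product A ⊕ V is an A₃-associative algebra. -/
theorem rep_iff_semidirect {K A V : Type*} [Field K] [AddCommGroup A] [Module K A]
    [AddCommGroup V] [Module K V]
    (m : A →ₗ[K] A →ₗ[K] A)
    (hA3 : ∀ x y z : A,
      m (m x y) z + m (m y z) x + m (m z x) y
        = m x (m y z) + m y (m z x) + m z (m x y))
    (l r : A →ₗ[K] Module.End K V)
    (star : A × V → A × V → A × V)
    (hstar : ∀ p q : A × V, star p q = (m p.1 q.1, l p.1 q.2 + r q.1 p.2)) :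
    (∀ (x y : A) (v : V),
      l (m x y) v - r (m x y) v + r x (l y v) - l x (l y v) + r y (r x v) - l y (r x v) = 0)
    ↔ (∀ p q s : A × V,
      star (star p q) s + star (star q s) p + star (star s p) q
        = star p (star q s) + star q (star s p) + star s (star p q)) := by
  constructor
  · rintro h ⟨x, u⟩ ⟨y, v⟩ ⟨z, w⟩
    simp only [hstar, Prod.mk.injEq, Prod.mk_add_mk, map_add]
    refine ⟨hA3 x y z, ?_⟩
    have h1 := h x y w
    have h2 := h y z u
    have h3 := h z x v
    have key :
        (l (m x y) w + (r z (l x v) + r z (r y u)) +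
            (l (m y z) u + (r x (l y w) + r x (r z v))) +
            (l (m z x) v + (r y (l z u) + r y (r x w)))) -
          (l x (l y w) + l x (r z v) + r (m y z) u +
            (l y (l z u) + l y (r x w) + r (m z x) v) +
            (l z (l x v) + l z (r y u) + r (m x y) w)) =
          (l (m x y) w - r (m x y) w + r x (l y w) - l x (l y w) + r y (r x w) - l y (r x w)) +
          (l (m y z) u - r (m y z) u + r y (l z u) - l y (l z u) + r z (r y u) - l z (r y u)) +
          (l (m z x) v - r (m z x) v + r z (l x v) - l z (l x v) + r x (r z v) - l x (r z v)) := by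
      abel
    rw [h1, h2, h3] at key
    simp only [add_zero] at key
    exact sub_eq_zero.mp key
  · intro h x y v
    have key := h (x, 0) (y, 0) (0, v)
    simp only [hstar, map_zero, Prod.mk_add_mk, Prod.mk.injEq, LinearMap.zero_apply, add_zero,
      zero_add] at key
    obtain ⟨-, key⟩ := key
    have : l (m x y) v - r (m x y) v + r x (l y v) - l x (l y v) + r y (r x v) - l y (r x v)
        = (l (m x y) v + r x (l y v) + r y (r x v)) -
          (l x (l y v) + l y (r x v) + r (m x y) v) := by abel
    rw [this, key, sub_self]
end

section
/- Let (A,·) be an admissible A_3-associative algebra with adjoint representation (L,R,A) where L(x)y = x·y = R(y)x. Then the semi-direct product algebra A ⋉_{L,R} A with product (x+d)*(y+e) = x·y + L(x)e + R(y)d (second summand an abelian copy of A) is again an admissible A_3-associative algebra. -/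
/-- The semi-direct product A ⋉_{L,R} A of an admissible A₃-associative algebra
with itself (via the adjoint representation) is an admissible A₃-associative
algebra. -/
theorem semidirect_adjoint_admissible {K A : Type*} [Field K] [AddCommGroup A] [Module K A]
    (m : A →ₗ[K] A →ₗ[K] A)
    (hA3 : ∀ x y z : A,
      m (m x y) z + m (m y z) x + m (m z x) y
        = m x (m y z) + m y (m z x) + m z (m x y))
    (hadm : ∀ x y z : A,
      m (m x z) y - m x (m z y) = m y (m z x) - m (m y z) x)
    (star : A × A → A × A → A × A)
    (hstar : ∀ p q : A × A, star p q = (m p.1 q.1, m p.1 q.2 + m p.2 q.1)) :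
    (∀ p q s : A × A,
      star (star p q) s + star (star q s) p + star (star s p) q
        = star p (star q s) + star q (star s p) + star s (star p q))
    ∧ (∀ p q s : A × A,
      star (star p s) q - star p (star s q) = star q (star s p) - star (star q s) p) := by
  constructor
  · intro p q s
    simp only [hstar, map_add, LinearMap.add_apply, Prod.mk_add_mk, Prod.mk.injEq]
    refine ⟨by linear_combination (norm := abel) hA3 p.1 q.1 s.1, ?_⟩
    have key := congrArg₂ (· + ·) (congrArg₂ (· + ·) (hA3 p.1 q.1 s.2) (hA3 p.1 q.2 s.1)) (hA3 p.2 q.1 s.1)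
    abel_nf at key ⊢
    exact key
  · intro p q s
    simp only [hstar, map_add, LinearMap.add_apply, Prod.mk_sub_mk, Prod.mk.injEq]
    refine ⟨by linear_combination (norm := abel) hadm p.1 q.1 s.1, ?_⟩
    have key := congrArg₂ (· + ·) (congrArg₂ (· + ·) (hadm p.1 q.1 s.2) (hadm p.1 q.2 s.1)) (hadm p.2 q.1 s.1)
    abel_nf at key ⊢
    exact key
end

section
/- Let (A,·,B) be a quadratic A_3-associative algebra with (A,·) admissible. Then the adjoint representation (L,R,A) and the coadjoint representation (R*,L*,A*) are equivalent; explicitly, the linear isomorphism B♮: A → A* defined by ⟨B♮(x),y⟩ = B(x,y) satisfies B♮(L(x)y) = R*(x)B♮(y) and B♮(R(x)y) = L*(x)B♮(y) for all x,y ∈ A. -/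
/-- For a quadratic admissible A₃-associative algebra (A,·,B), the adjoint and
coadjoint representations are equivalent via B♮. -/
theorem adjoint_coadjoint_equivalent {K A : Type*} [Field K] [AddCommGroup A] [Module K A]
    [FiniteDimensional K A]
    (m : A →ₗ[K] A →ₗ[K] A)
    (hA3 : ∀ x y z : A,
      m (m x y) z + m (m y z) x + m (m z x) y
        = m x (m y z) + m y (m z x) + m z (m x y))
    (hadm : ∀ x y z : A,
      m (m x z) y - m x (m z y) = m y (m z x) - m (m y z) x)
    (B : A →ₗ[K] A →ₗ[K] K)
    (hsymm : ∀ x y : A, B x y = B y x)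
    (hnondeg : ∀ x : A, (∀ y : A, B x y = 0) → x = 0)
    (hinv : ∀ x y z : A, B (m x y) z = B x (m y z)) :
    Function.Bijective B
    ∧ (∀ x y : A, B (m x y) = (m.flip x).dualMap (B y))
    ∧ (∀ x y : A, B (m.flip x y) = (m x).dualMap (B y)) := by
  have hinj : Function.Injective B := by
    rw [injective_iff_map_eq_zero]
    intro x hx
    exact hnondeg x fun y => by rw [hx]; simp
  refine ⟨⟨hinj, ?_⟩, ?_, ?_⟩
  · have h : Module.finrank K A = Module.finrank K (Module.Dual K A) :=
      (Subspace.dual_finrank_eq (K := K) (V := A)).symm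
    exact (LinearMap.injective_iff_surjective_of_finrank_eq_finrank h).mp hinj
  · intro x y
    ext z
    simp only [LinearMap.dualMap_apply, LinearMap.flip_apply]
    rw [hsymm, ← hinv, hsymm]
  · intro x y
    ext z
    simp only [LinearMap.dualMap_apply, LinearMap.flip_apply]
    exact hinv y x z
end

section
/- Let (A,·) be an admissible A_3-associative algebra, and consider the semi-direct product algebra 𝔡 = A ⋉_{R*,L*} A* with product (x+a*)·_𝔡(y+b*) = x·y + R*(x)b* + L*(y)a*. Then the bilinear form B_𝔡(x+a*, y+b*) = ⟨b*,x⟩ + ⟨a*,y⟩ is nondegenerate, symmetric, and invariant (B_𝔡(u·_𝔡 v, w) = B_𝔡(u, v·_𝔡 w)), so (𝔡, ·_𝔡, B_𝔡) is a quadratic A_3-associative algebra. -/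
open TensorProduct

/-- The semi-direct product 𝔡 = A ⋉_{R*,L*} A* of an admissible A₃-associative
algebra with the coadjoint representation, together with the canonical pairing,
is a quadratic A₃-associative algebra. -/
theorem semidirect_coadjoint_quadratic {K A : Type*} [Field K] [AddCommGroup A] [Module K A]
    [FiniteDimensional K A]
    (m : A →ₗ[K] A →ₗ[K] A)
    (hA3 : ∀ x y z : A,
      m (m x y) z + m (m y z) x + m (m z x) y
        = m x (m y z) + m y (m z x) + m z (m x y))
    (hadm : ∀ x y z : A,
      m (m x z) y - m x (m z y) = m y (m z x) - m (m y z) x)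
    (star : A × Module.Dual K A → A × Module.Dual K A → A × Module.Dual K A)
    (hstar : ∀ p q : A × Module.Dual K A,
      star p q = (m p.1 q.1, (m.flip p.1).dualMap q.2 + (m q.1).dualMap p.2))
    (Bd : A × Module.Dual K A → A × Module.Dual K A → K)
    (hBd : ∀ p q : A × Module.Dual K A, Bd p q = q.2 p.1 + p.2 q.1) :
    (∀ p q, Bd p q = Bd q p)
    ∧ (∀ p, (∀ q, Bd p q = 0) → p = 0)
    ∧ (∀ p q s, Bd (star p q) s = Bd p (star q s))
    ∧ (∀ p q s,
        star (star p q) s + star (star q s) p + star (star s p) q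
          = star p (star q s) + star q (star s p) + star s (star p q)) := by
  -- key identity from A3 + admissibility
  have key : ∀ a b z : A,
      m z (m a b) + m (m a z) b + m a (m b z)
        = m (m z a) b + m a (m z b) + m (m a b) z := by
    intro a b z
    have h1 := hA3 z a b
    have h2 := hadm a b z
    have h2' : m (m a z) b = m a (m z b) + (m b (m z a) - m (m b z) a) := by
      rw [← h2]; abel
    rw [h2']
    have h1' : m z (m a b) = m (m z a) b + m (m a b) z + m (m b z) a
        - m a (m b z) - m b (m z a) := by
      rw [eq_sub_iff_add_eq, eq_sub_iff_add_eq]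
      calc m z (m a b) + m b (m z a) + m a (m b z)
          = m a (m b z) + m b (m z a) + m z (m a b) := by abel
        _ = m (m a b) z + m (m b z) a + m (m z a) b := (hA3 a b z).symm
        _ = m (m z a) b + m (m a b) z + m (m b z) a := by abel
    rw [h1']; abel
  refine ⟨?_, ?_, ?_, ?_⟩
  · intro p q
    rw [hBd, hBd]; ring
  · intro p hp
    have h1 : p.2 = 0 := by
      ext y
      have := hp (y, 0)
      rw [hBd] at this
      simpa using this
    have h2 : p.1 = 0 := by
      rw [← Module.forall_dual_apply_eq_zero_iff K]
      intro φ
      have := hp (0, φ)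
      rw [hBd] at this
      simpa [h1] using this
    exact Prod.ext h2 h1
  · intro p q s
    rw [hBd, hBd, hstar, hstar]
    simp only [LinearMap.add_apply, LinearMap.dualMap_apply, LinearMap.flip_apply,
      LinearMap.coe_comp, Function.comp_apply]
    ring
  · intro p q s
    have expand : ∀ u v : A × Module.Dual K A, star u v
        = (m u.1 v.1, (m.flip u.1).dualMap v.2 + (m v.1).dualMap u.2) := hstar
    refine Prod.ext ?_ ?_
    · simp only [Prod.fst_add, expand]
      exact hA3 p.1 q.1 s.1
    · simp only [Prod.snd_add, expand]
      refine LinearMap.ext fun z => ?_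
      simp only [LinearMap.add_apply, LinearMap.dualMap_apply, LinearMap.flip_apply,
        LinearMap.coe_comp, Function.comp_apply]
      have k1 := congrArg s.2 (key p.1 q.1 z)
      have k2 := congrArg p.2 (key q.1 s.1 z)
      have k3 := congrArg q.2 (key s.1 p.1 z)
      simp only [map_add] at k1 k2 k3
      linear_combination k1 + k2 + k3
end

section
/- Let A be a finite-dimensional vector space, Δ: A → A⊗A a linear map, and ∘ on A* its dual defined by ⟨a*∘b*,x⟩ = ⟨a*⊗b*,Δ(x)⟩. Then (A,Δ) is an admissible A_3-associative coalgebra (i.e., additionally ξ(τ⊗id)(Δ⊗id)Δ − (id⊗τ)(id⊗Δ)Δ + ξ²(Δ⊗id − id⊗Δ)Δ = 0, where τ(x⊗y) = y⊗x and ξ(x⊗y⊗z) = y⊗z⊗x) if and only if (A*,∘) is an admissible A_3-associative algebra. -/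
open TensorProduct

section AuxA3
open Module
set_option linter.unusedSectionVars false

variable {K A : Type*} [Field K] [AddCommGroup A] [Module K A] [FiniteDimensional K A]

/-- The functional on `(A ⊗ A) ⊗ A` given by `a ⊗ b ⊗ c` in the dual. -/
noncomputable def tripA3 (a b c : Dual K A) : Dual K ((A ⊗[K] A) ⊗[K] A) :=
  TensorProduct.dualDistrib K (A ⊗[K] A) A ((TensorProduct.dualDistrib K A A (a ⊗ₜ b)) ⊗ₜ c)

lemma dualDistrib_surj_A3 {M N : Type*} [AddCommGroup M] [Module K M] [FiniteDimensional K M]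
    [AddCommGroup N] [Module K N] [FiniteDimensional K N] :
    Function.Surjective
    (TensorProduct.dualDistrib K M N : Dual K M ⊗[K] Dual K N →ₗ[K] Dual K (M ⊗[K] N)) := by
  have h : ⇑(TensorProduct.dualDistribEquiv K M N) =
      ⇑(TensorProduct.dualDistrib K M N) := rfl
  rw [← h]
  exact (TensorProduct.dualDistribEquiv K M N).surjective

lemma trip_sep_A3 (v : (A ⊗[K] A) ⊗[K] A) (h : ∀ a b c : Dual K A, tripA3 a b c v = 0) :
    v = 0 := by
  rw [← Module.forall_dual_apply_eq_zero_iff K]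
  intro f
  obtain ⟨w, rfl⟩ := dualDistrib_surj_A3 (K := K) f
  induction w using TensorProduct.induction_on with
  | zero => simp
  | add u v hu hv => simp_all
  | tmul u c =>
    obtain ⟨w', rfl⟩ := dualDistrib_surj_A3 (K := K) u
    induction w' using TensorProduct.induction_on with
    | zero => simp
    | add u' v' hu' hv' => simp_all [add_tmul]
    | tmul a b => exact h a b c

lemma map_zero_iff_A3 (F : A →ₗ[K] (A ⊗[K] A) ⊗[K] A) :
    F = 0 ↔ ∀ a b c : Dual K A, tripA3 a b c ∘ₗ F = 0 := by
  constructor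
  · rintro rfl a b c; ext x; simp
  · intro h
    ext x
    refine trip_sep_A3 (F x) fun a b c => ?_
    simpa using LinearMap.congr_fun (h a b c) x

variable (Δ : A →ₗ[K] A ⊗[K] A) (a b c : Dual K A)

lemma auxA3_1 : tripA3 a b c ∘ₗ TensorProduct.map Δ LinearMap.id
    = TensorProduct.dualDistrib K A A ((TensorProduct.dualDistrib K A A (a ⊗ₜ b) ∘ₗ Δ) ⊗ₜ c) := by
  apply TensorProduct.ext'
  intro y z
  simp [tripA3, TensorProduct.dualDistrib_apply]

lemma auxA3_2 : tripA3 a b c ∘ₗ (TensorProduct.assoc K A A A).symm.toLinearMap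
    = TensorProduct.dualDistrib K A (A ⊗[K] A)
        (a ⊗ₜ TensorProduct.dualDistrib K A A (b ⊗ₜ c)) := by
  apply TensorProduct.ext'
  intro x yz
  induction yz using TensorProduct.induction_on with
  | zero => simp
  | add u v hu hv => simp_all [tmul_add]
  | tmul y z => simp [tripA3, TensorProduct.dualDistrib_apply]; ring

lemma auxA3_3 {N P : Type*} [AddCommGroup N] [Module K N] [AddCommGroup P] [Module K P]
    (u : Dual K N) (g : P →ₗ[K] N) :
    TensorProduct.dualDistrib K A N (a ⊗ₜ u) ∘ₗ TensorProduct.map LinearMap.id g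
      = TensorProduct.dualDistrib K A P (a ⊗ₜ (u ∘ₗ g)) := by
  apply TensorProduct.ext'
  intro x p
  simp [TensorProduct.dualDistrib_apply]

lemma auxA3_4 : tripA3 a b c ∘ₗ ((TensorProduct.comm K A (A ⊗[K] A)).toLinearMap ∘ₗ
      (TensorProduct.assoc K A A A).toLinearMap) = tripA3 c a b := by
  apply TensorProduct.ext_threefold
  intro x y z
  simp [tripA3, TensorProduct.dualDistrib_apply]; ring

lemma auxA3_5 : tripA3 a b c ∘ₗ
    TensorProduct.map (TensorProduct.comm K A A).toLinearMap LinearMap.id = tripA3 b a c := by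
  apply TensorProduct.ext_threefold
  intro x y z
  simp only [tripA3, LinearMap.coe_comp, Function.comp_apply, map_tmul, LinearEquiv.coe_coe,
    comm_tmul, LinearMap.id_coe, id_eq, TensorProduct.dualDistrib_apply]
  ring

lemma auxA3_7 : TensorProduct.dualDistrib K A A (b ⊗ₜ c)
      ∘ₗ (TensorProduct.comm K A A).toLinearMap
    = TensorProduct.dualDistrib K A A (c ⊗ₜ b) := by
  apply TensorProduct.ext'
  intro x y
  simp only [LinearMap.coe_comp, Function.comp_apply, LinearEquiv.coe_coe, comm_tmul,
    TensorProduct.dualDistrib_apply]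
  ring

end AuxA3

/-- (A,Δ) is an admissible A₃-associative coalgebra iff the dual multiplication
makes A* an admissible A₃-associative algebra. -/
theorem admissibleA3Coalgebra_iff_dual {K A : Type*} [Field K] [AddCommGroup A] [Module K A]
    [FiniteDimensional K A]
    (Δ : A →ₗ[K] A ⊗[K] A)
    (circ : Module.Dual K A → Module.Dual K A → Module.Dual K A)
    (hcirc : ∀ a b : Module.Dual K A,
      circ a b = (TensorProduct.dualDistrib K A A (a ⊗ₜ b)) ∘ₗ Δ)
    (ξ : (A ⊗[K] A) ⊗[K] A →ₗ[K] (A ⊗[K] A) ⊗[K] A)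
    (hξ : ξ = (TensorProduct.comm K A (A ⊗[K] A)).toLinearMap ∘ₗ
      (TensorProduct.assoc K A A A).toLinearMap) :
    (((LinearMap.id + ξ + ξ ∘ₗ ξ) ∘ₗ
        (TensorProduct.map Δ LinearMap.id ∘ₗ Δ
          - (TensorProduct.assoc K A A A).symm.toLinearMap
              ∘ₗ TensorProduct.map LinearMap.id Δ ∘ₗ Δ) = 0)
      ∧ (ξ ∘ₗ TensorProduct.map (TensorProduct.comm K A A).toLinearMap LinearMap.id
            ∘ₗ TensorProduct.map Δ LinearMap.id ∘ₗ Δ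
          - (TensorProduct.assoc K A A A).symm.toLinearMap
              ∘ₗ TensorProduct.map LinearMap.id (TensorProduct.comm K A A).toLinearMap
              ∘ₗ TensorProduct.map LinearMap.id Δ ∘ₗ Δ
          + (ξ ∘ₗ ξ) ∘ₗ
              (TensorProduct.map Δ LinearMap.id ∘ₗ Δ
                - (TensorProduct.assoc K A A A).symm.toLinearMap
                    ∘ₗ TensorProduct.map LinearMap.id Δ ∘ₗ Δ) = 0))
    ↔ ((∀ a b c : Module.Dual K A,
          circ (circ a b) c + circ (circ b c) a + circ (circ c a) b
            = circ a (circ b c) + circ b (circ c a) + circ c (circ a b))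
      ∧ (∀ a b c : Module.Dual K A,
          circ (circ a c) b - circ a (circ c b) = circ b (circ c a) - circ (circ b c) a)) := by
  -- basic composition lemmas specialized to `circ`
  have hL : ∀ a b c : Module.Dual K A,
      tripA3 a b c ∘ₗ (TensorProduct.map Δ LinearMap.id ∘ₗ Δ) = circ (circ a b) c := by
    intro a b c
    rw [← LinearMap.comp_assoc, auxA3_1, hcirc (circ a b) c, hcirc a b]
  have hR : ∀ a b c : Module.Dual K A,
      tripA3 a b c ∘ₗ ((TensorProduct.assoc K A A A).symm.toLinearMap
        ∘ₗ TensorProduct.map LinearMap.id Δ ∘ₗ Δ) = circ a (circ b c) := by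
    intro a b c
    rw [← LinearMap.comp_assoc, auxA3_2, ← LinearMap.comp_assoc, auxA3_3,
      hcirc a (circ b c), hcirc b c]
  have hE : ∀ a b c : Module.Dual K A,
      tripA3 a b c ∘ₗ (TensorProduct.map Δ LinearMap.id ∘ₗ Δ
          - (TensorProduct.assoc K A A A).symm.toLinearMap
              ∘ₗ TensorProduct.map LinearMap.id Δ ∘ₗ Δ)
        = circ (circ a b) c - circ a (circ b c) := by
    intro a b c
    rw [LinearMap.comp_sub, hL, hR]
  have hXi : ∀ (a b c : Module.Dual K A) (F : A →ₗ[K] (A ⊗[K] A) ⊗[K] A),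
      tripA3 a b c ∘ₗ (ξ ∘ₗ F) = tripA3 c a b ∘ₗ F := by
    intro a b c F
    rw [← LinearMap.comp_assoc, hξ, auxA3_4]
  have hXi2 : ∀ (a b c : Module.Dual K A) (F : A →ₗ[K] (A ⊗[K] A) ⊗[K] A),
      tripA3 a b c ∘ₗ ((ξ ∘ₗ ξ) ∘ₗ F) = tripA3 b c a ∘ₗ F := by
    intro a b c F
    rw [LinearMap.comp_assoc, hXi, hXi]
  have key1 : ∀ a b c : Module.Dual K A,
      tripA3 a b c ∘ₗ ((LinearMap.id + ξ + ξ ∘ₗ ξ) ∘ₗ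
        (TensorProduct.map Δ LinearMap.id ∘ₗ Δ
          - (TensorProduct.assoc K A A A).symm.toLinearMap
              ∘ₗ TensorProduct.map LinearMap.id Δ ∘ₗ Δ))
      = (circ (circ a b) c + circ (circ b c) a + circ (circ c a) b)
        - (circ a (circ b c) + circ b (circ c a) + circ c (circ a b)) := by
    intro a b c
    rw [← LinearMap.comp_assoc, LinearMap.comp_add, LinearMap.comp_add, LinearMap.comp_id,
      hξ, auxA3_4, ← LinearMap.comp_assoc, auxA3_4, auxA3_4,
      LinearMap.add_comp, LinearMap.add_comp, hE, hE, hE]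
    abel
  have key2 : ∀ a b c : Module.Dual K A,
      tripA3 a b c ∘ₗ
        (ξ ∘ₗ TensorProduct.map (TensorProduct.comm K A A).toLinearMap LinearMap.id
            ∘ₗ TensorProduct.map Δ LinearMap.id ∘ₗ Δ
          - (TensorProduct.assoc K A A A).symm.toLinearMap
              ∘ₗ TensorProduct.map LinearMap.id (TensorProduct.comm K A A).toLinearMap
              ∘ₗ TensorProduct.map LinearMap.id Δ ∘ₗ Δ
          + (ξ ∘ₗ ξ) ∘ₗ
              (TensorProduct.map Δ LinearMap.id ∘ₗ Δ
                - (TensorProduct.assoc K A A A).symm.toLinearMap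
                    ∘ₗ TensorProduct.map LinearMap.id Δ ∘ₗ Δ))
      = (circ (circ a c) b - circ a (circ c b))
        + (circ (circ b c) a - circ b (circ c a)) := by
    intro a b c
    rw [LinearMap.comp_add, LinearMap.comp_sub, hXi2, hE,
      hXi, ← LinearMap.comp_assoc, auxA3_5, hL,
      ← LinearMap.comp_assoc, auxA3_2, ← LinearMap.comp_assoc, auxA3_3, auxA3_7,
      ← LinearMap.comp_assoc, auxA3_3, ← hcirc c b, ← hcirc a (circ c b)]
  refine and_congr ?_ ?_
  · rw [map_zero_iff_A3]
    refine forall_congr' fun a => forall_congr' fun b => forall_congr' fun c => ?_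
    rw [key1 a b c, sub_eq_zero]
  · rw [map_zero_iff_A3]
    refine forall_congr' fun a => forall_congr' fun b => forall_congr' fun c => ?_
    rw [key2 a b c, add_eq_zero_iff_eq_neg, neg_sub, sub_eq_sub_iff_sub_eq_sub]
end

section
/- Let (A,·) be an admissible A_3-associative algebra, r ∈ A⊗A skew-symmetric with r♯: A* → A defined by ⟨r♯(a*), b*⟩ = ⟨r, a*⊗b*⟩ invertible, and define ω(x,y) = ⟨(r♯)⁻¹(x), y⟩. Then r is a solution of the A_3-associative Yang-Baxter equation AY(r) = 0 if and only if ω is a Connes cocycle, i.e., ω(x·y,z) + ω(y·z,x) + ω(z·x,y) = 0 for all x,y,z ∈ A. -/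
open TensorProduct

lemma dualDistrib_surjective_aux (K M N : Type*) [Field K] [AddCommGroup M] [AddCommGroup N]
    [Module K M] [Module K N] [FiniteDimensional K M] [FiniteDimensional K N] :
    Function.Surjective (TensorProduct.dualDistrib K M N) := by
  classical
  intro φ
  refine ⟨TensorProduct.dualDistribInvOfBasis (Module.Basis.ofVectorSpace K M)
    (Module.Basis.ofVectorSpace K N) φ, ?_⟩
  have h := TensorProduct.dualDistrib_dualDistribInvOfBasis_left_inverse
    (Module.Basis.ofVectorSpace K M) (Module.Basis.ofVectorSpace K N)
  exact DFunLike.congr_fun h φ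

/-- For invertible skew-symmetric r with ω(x,y) = ⟨(r♯)⁻¹x, y⟩, r solves the
A₃-associative Yang–Baxter equation iff ω is a Connes cocycle. -/
theorem AYBE_iff_ConnesCocycle {K A : Type*} [Field K] [AddCommGroup A] [Module K A]
    [FiniteDimensional K A]
    (m : A →ₗ[K] A →ₗ[K] A)
    (hA3 : ∀ x y z : A,
      m (m x y) z + m (m y z) x + m (m z x) y
        = m x (m y z) + m y (m z x) + m z (m x y))
    (hadm : ∀ x y z : A,
      m (m x z) y - m x (m z y) = m y (m z x) - m (m y z) x)
    (r : A ⊗[K] A)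
    (hskew : TensorProduct.comm K A A r = -r)
    (AY : (A ⊗[K] A) ⊗[K] (A ⊗[K] A) →ₗ[K] (A ⊗[K] A) ⊗[K] A)
    (hAY : ∀ a b c d : A,
      AY ((a ⊗ₜ b) ⊗ₜ (c ⊗ₜ d))
        = (a ⊗ₜ c) ⊗ₜ m b d - (a ⊗ₜ m c b) ⊗ₜ d + (m c a ⊗ₜ d) ⊗ₜ b)
    (f : Module.Dual K A →ₗ[K] A)
    (hf : ∀ a b : Module.Dual K A, b (f a) = TensorProduct.dualDistrib K A A (a ⊗ₜ b) r)
    (hbij : Function.Bijective f)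
    (ω : A → A → K)
    (hω : ∀ (a : Module.Dual K A) (y : A), ω (f a) y = a y) :
    AY (r ⊗ₜ r) = 0 ↔ ∀ x y z : A, ω (m x y) z + ω (m y z) x + ω (m z x) y = 0 := by
  classical
  -- skew-symmetry of the pairing
  have hsk : ∀ a b : Module.Dual K A, a (f b) = - b (f a) := by
    intro a b
    have h1 : TensorProduct.dualDistrib K A A (b ⊗ₜ a)
        = (TensorProduct.dualDistrib K A A (a ⊗ₜ b)) ∘ₗ
          (TensorProduct.comm K A A).toLinearMap := by
      apply TensorProduct.ext'
      intro x y
      simp [mul_comm]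
    rw [hf b a, h1]
    simp only [LinearMap.coe_comp, LinearEquiv.coe_coe, Function.comp_apply, hskew,
      map_neg]
    rw [hf a b]
  -- skew-symmetry of ω
  have hωsk : ∀ s t : A, ω s t = - ω t s := by
    intro s t
    obtain ⟨a, rfl⟩ := hbij.surjective s
    obtain ⟨b, rfl⟩ := hbij.surjective t
    rw [hω, hω, hsk]
  -- the evaluation functional
  set D2 := TensorProduct.dualDistrib K A A with hD2
  set T : Module.Dual K A → Module.Dual K A → Module.Dual K A →
      Module.Dual K ((A ⊗[K] A) ⊗[K] A) :=
    fun a b c => TensorProduct.dualDistrib K (A ⊗[K] A) A ((D2 (a ⊗ₜ b)) ⊗ₜ c) with hT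
  -- main computation
  have hmain : ∀ a b c : Module.Dual K A,
      T a b c (AY (r ⊗ₜ r))
        = c (m (f a) (f b)) + b (m (f c) (f a)) + a (m (f b) (f c)) := by
    intro a b c
    set Lb : (A ⊗[K] A) →ₗ[K] (A ⊗[K] A) →ₗ[K] K :=
      LinearMap.compr₂ (TensorProduct.mk K (A ⊗[K] A) (A ⊗[K] A)) ((T a b c) ∘ₗ AY) with hLb
    have hLbapp : ∀ s t : A ⊗[K] A, Lb s t = T a b c (AY (s ⊗ₜ t)) := fun s t => rfl
    -- step 1 : evaluate Lb on a pure tensor in the first slot, against r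
    have claim1 : ∀ u v : A, Lb (u ⊗ₜ v) r
        = a u * c (m v (f b)) + a u * b (m (f c) v) - c v * a (m (f b) u) := by
      intro u v
      have hfun : Lb (u ⊗ₜ v)
          = a u • (D2 (b ⊗ₜ (c ∘ₗ m v)))
            - a u • (D2 ((b ∘ₗ (m.flip v)) ⊗ₜ c))
            + c v • (D2 ((a ∘ₗ (m.flip u)) ⊗ₜ b)) := by
        apply LinearMap.ext
        intro s
        induction s using TensorProduct.induction_on with
        | zero => simp
        | tmul w t =>
          rw [hLbapp]
          simp only [hAY, map_add, map_sub, hD2, hT]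
          simp only [TensorProduct.dualDistrib_apply, LinearMap.add_apply,
            LinearMap.sub_apply, LinearMap.smul_apply, smul_eq_mul,
            LinearMap.coe_comp, Function.comp_apply, LinearMap.flip_apply]
          ring
        | add s₁ s₂ h₁ h₂ => simp only [map_add, h₁, h₂]
      rw [hfun]
      simp only [LinearMap.add_apply, LinearMap.sub_apply, LinearMap.smul_apply, smul_eq_mul]
      rw [← hf b (c ∘ₗ m v), ← hf (b ∘ₗ (m.flip v)) c, ← hf (a ∘ₗ (m.flip u)) b]
      rw [hsk c (b ∘ₗ (m.flip v)), hsk b (a ∘ₗ (m.flip u))]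
      simp only [LinearMap.coe_comp, Function.comp_apply, LinearMap.flip_apply]
      ring
    -- step 2 : sum over the first slot
    have hfun2 : Lb.flip r
        = D2 (a ⊗ₜ (c ∘ₗ (m.flip (f b))))
          + D2 (a ⊗ₜ (b ∘ₗ (m (f c))))
          - D2 ((a ∘ₗ (m (f b))) ⊗ₜ c) := by
      apply TensorProduct.ext'
      intro u v
      simp only [LinearMap.flip_apply, LinearMap.add_apply, LinearMap.sub_apply]
      rw [claim1 u v]
      simp only [hD2, TensorProduct.dualDistrib_apply, LinearMap.coe_comp,
        Function.comp_apply, LinearMap.flip_apply]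
      ring
    have : T a b c (AY (r ⊗ₜ r)) = Lb.flip r r := rfl
    rw [this, hfun2]
    simp only [LinearMap.add_apply, LinearMap.sub_apply]
    rw [← hf a (c ∘ₗ (m.flip (f b))), ← hf a (b ∘ₗ (m (f c))), ← hf (a ∘ₗ (m (f b))) c]
    rw [hsk c (a ∘ₗ (m (f b)))]
    simp only [LinearMap.coe_comp, Function.comp_apply, LinearMap.flip_apply]
    ring
  -- separation lemma
  have hsep : ∀ w : (A ⊗[K] A) ⊗[K] A,
      (∀ a b c : Module.Dual K A,
        TensorProduct.dualDistrib K (A ⊗[K] A) A ((D2 (a ⊗ₜ b)) ⊗ₜ c) w = 0) → w = 0 := by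
    intro w h
    rw [← Module.forall_dual_apply_eq_zero_iff K w]
    intro φ
    obtain ⟨ψ, rfl⟩ := dualDistrib_surjective_aux K (A ⊗[K] A) A φ
    induction ψ using TensorProduct.induction_on with
    | zero => simp
    | tmul g c =>
      obtain ⟨χ, rfl⟩ := dualDistrib_surjective_aux K A A g
      induction χ using TensorProduct.induction_on with
      | zero => simp
      | tmul a b => exact h a b c
      | add χ₁ χ₂ h₁ h₂ =>
        rw [map_add, TensorProduct.add_tmul, map_add, LinearMap.add_apply, h₁, h₂, add_zero]
    | add ψ₁ ψ₂ h₁ h₂ =>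
      rw [map_add, LinearMap.add_apply, h₁, h₂, add_zero]
  constructor
  · intro h x y z
    obtain ⟨a, rfl⟩ := hbij.surjective x
    obtain ⟨b, rfl⟩ := hbij.surjective y
    obtain ⟨c, rfl⟩ := hbij.surjective z
    have h0 := hmain a b c
    rw [h, map_zero] at h0
    have e1 : ω (m (f a) (f b)) (f c) = - c (m (f a) (f b)) := by
      rw [hωsk, hω]
    have e2 : ω (m (f b) (f c)) (f a) = - a (m (f b) (f c)) := by
      rw [hωsk, hω]
    have e3 : ω (m (f c) (f a)) (f b) = - b (m (f c) (f a)) := by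
      rw [hωsk, hω]
    rw [e1, e2, e3]
    linear_combination h0
  · intro h
    apply hsep
    intro a b c
    rw [hmain a b c]
    have h0 := h (f a) (f b) (f c)
    have e1 : ω (m (f a) (f b)) (f c) = - c (m (f a) (f b)) := by
      rw [hωsk, hω]
    have e2 : ω (m (f b) (f c)) (f a) = - a (m (f b) (f c)) := by
      rw [hωsk, hω]
    have e3 : ω (m (f c) (f a)) (f b) = - b (m (f c) (f a)) := by
      rw [hωsk, hω]
    rw [e1, e2, e3] at h0
    linear_combination -h0
end

section
/- Let (A,·) be an admissible A_3-associative algebra, r ∈ A⊗A skew-symmetric, r♯: A* → A defined by ⟨r♯(a*),b*⟩ = ⟨r,a*⊗b*⟩, and ∘ the product on A* given by a*∘b* = R*(r♯(a*))b* + L*(r♯(b*))a*. Then for all a*,b*,c* ∈ A*: ⟨r♯(a*)·r♯(b*) − r♯(a*∘b*), c*⟩ = ⟨a*⊗b*⊗c*, AY(r)⟩. In particular, r is a solution of the A_3-associative Yang-Baxter equation if and only if r♯ is a relative Rota-Baxter operator: r♯(a*)·r♯(b*) = r♯(R*(r♯(a*))b* + L*(r♯(b*))a*) for all a*,b*. 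-/
open TensorProduct

section ContrAux

variable {K A : Type*} [Field K] [AddCommGroup A] [Module K A]

/-- Contraction `a ↦ (u ⊗ v ↦ a u • v)`. -/
noncomputable def contrAux : Module.Dual K A →ₗ[K] A ⊗[K] A →ₗ[K] A where
  toFun a := (TensorProduct.lid K A).toLinearMap ∘ₗ LinearMap.rTensor A a
  map_add' a b := by
    simp only [LinearMap.rTensor_add]; ext u v; simp
  map_smul' c a := by
    simp only [LinearMap.rTensor_smul, RingHom.id_apply]; ext u v; simp

@[simp] theorem contrAux_tmul (u v : A) (a : Module.Dual K A) :
    contrAux a (u ⊗ₜ[K] v) = a u • v := by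
  simp [contrAux]

theorem contrAux_eq (r : A ⊗[K] A) (a b : Module.Dual K A) :
    b (contrAux a r) = TensorProduct.dualDistrib K A A (a ⊗ₜ b) r := by
  induction r using TensorProduct.induction_on with
  | zero => simp
  | tmul u v => simp [TensorProduct.dualDistrib_apply, mul_comm]
  | add x y hx hy => simp [hx, hy]

@[simp] theorem dualMap_add'' (g g' : A →ₗ[K] A) (b : Module.Dual K A) :
    (g + g').dualMap b = g.dualMap b + g'.dualMap b := by ext x; simp

@[simp] theorem dualMap_zero'' (b : Module.Dual K A) :
    (0 : A →ₗ[K] A).dualMap b = 0 := by ext x; simp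

@[simp] theorem dualMap_neg'' (g : A →ₗ[K] A) (b : Module.Dual K A) :
    (-g).dualMap b = -(g.dualMap b) := by ext x; simp

end ContrAux

/-- ⟨r♯(a*)·r♯(b*) − r♯(a*∘b*), c*⟩ = ⟨a*⊗b*⊗c*, AY(r)⟩; in particular r solves
the A₃-associative Yang–Baxter equation iff r♯ is a relative Rota–Baxter
operator associated to the coadjoint representation (R*,L*,A*). -/
theorem AYBE_iff_relativeRotaBaxter {K A : Type*} [Field K] [AddCommGroup A] [Module K A]
    [FiniteDimensional K A]
    (m : A →ₗ[K] A →ₗ[K] A)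
    (hA3 : ∀ x y z : A,
      m (m x y) z + m (m y z) x + m (m z x) y
        = m x (m y z) + m y (m z x) + m z (m x y))
    (hadm : ∀ x y z : A,
      m (m x z) y - m x (m z y) = m y (m z x) - m (m y z) x)
    (r : A ⊗[K] A)
    (hskew : TensorProduct.comm K A A r = -r)
    (AY : (A ⊗[K] A) ⊗[K] (A ⊗[K] A) →ₗ[K] (A ⊗[K] A) ⊗[K] A)
    (hAY : ∀ a b c d : A,
      AY ((a ⊗ₜ b) ⊗ₜ (c ⊗ₜ d))
        = (a ⊗ₜ c) ⊗ₜ m b d - (a ⊗ₜ m c b) ⊗ₜ d + (m c a ⊗ₜ d) ⊗ₜ b)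
    (f : Module.Dual K A →ₗ[K] A)
    (hf : ∀ a b : Module.Dual K A, b (f a) = TensorProduct.dualDistrib K A A (a ⊗ₜ b) r)
    (circ : Module.Dual K A → Module.Dual K A → Module.Dual K A)
    (hcirc : ∀ a b : Module.Dual K A,
      circ a b = (m.flip (f a)).dualMap b + (m (f b)).dualMap a) :
    (∀ a b c : Module.Dual K A,
      c (m (f a) (f b)) - c (f (circ a b))
        = TensorProduct.dualDistrib K (A ⊗[K] A) A
            (TensorProduct.dualDistrib K A A (a ⊗ₜ b) ⊗ₜ c) (AY (r ⊗ₜ r)))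
    ∧ (AY (r ⊗ₜ r) = 0 ↔ ∀ a b : Module.Dual K A, m (f a) (f b) = f (circ a b)) := by
  -- `f` is the contraction against `r`
  have hfc : ∀ a : Module.Dual K A, f a = contrAux a r := by
    intro a
    rw [← sub_eq_zero, ← Module.forall_dual_apply_eq_zero_iff K]
    intro φ
    rw [map_sub, hf, contrAux_eq, sub_self]
  -- key bilinear identity
  have key : ∀ a b c : Module.Dual K A, ∀ s t : A ⊗[K] A,
      TensorProduct.dualDistrib K (A ⊗[K] A) A
          (TensorProduct.dualDistrib K A A (a ⊗ₜ b) ⊗ₜ c) (AY (s ⊗ₜ t))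
        = c (m (contrAux a s) (contrAux b t))
          - c (contrAux ((m.flip (contrAux a s)).dualMap b) t)
          + c (contrAux ((m (contrAux b (TensorProduct.comm K A A t))).dualMap a) s) := by
    intro a b c s t
    induction s using TensorProduct.induction_on with
    | zero => simp
    | add s₁ s₂ h₁ h₂ =>
      rw [add_tmul, map_add, map_add, h₁, h₂]
      simp only [map_add, LinearMap.add_apply, dualMap_add'']
      ring
    | tmul u v =>
      induction t using TensorProduct.induction_on with
      | zero => simp
      | add t₁ t₂ h₁ h₂ =>
        rw [tmul_add, map_add, map_add, h₁, h₂]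
        simp only [map_add, LinearMap.add_apply, dualMap_add'']
        ring
      | tmul x y =>
        rw [hAY]
        simp only [map_sub, map_add, TensorProduct.dualDistrib_apply, contrAux_tmul,
          TensorProduct.comm_tmul, map_smul, LinearMap.smul_apply, LinearMap.dualMap_apply,
          LinearMap.flip_apply, smul_eq_mul]
        ring
  -- the functional identity for s = t = r, using skew-symmetry
  have main : ∀ a b c : Module.Dual K A,
      c (m (f a) (f b)) - c (f (circ a b))
        = TensorProduct.dualDistrib K (A ⊗[K] A) A
            (TensorProduct.dualDistrib K A A (a ⊗ₜ b) ⊗ₜ c) (AY (r ⊗ₜ r)) := by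
    intro a b c
    rw [key a b c r r, hskew]
    have hneg : (m (contrAux b (-r))).dualMap a = -((m (contrAux b r)).dualMap a) := by
      ext x; simp
    rw [hneg, map_neg, LinearMap.neg_apply, map_neg]
    rw [hcirc a b, hfc a, hfc b]
    rw [show f ((m.flip (contrAux a r)).dualMap b + (m (contrAux b r)).dualMap a)
          = contrAux ((m.flip (contrAux a r)).dualMap b) r
            + contrAux ((m (contrAux b r)).dualMap a) r by
      rw [hfc, map_add, LinearMap.add_apply]]
    rw [map_add]
    ring
  refine ⟨main, ?_, ?_⟩
  · -- AY(r⊗r) = 0 → Rota–Baxter identity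
    intro h0 a b
    rw [← sub_eq_zero, ← Module.forall_dual_apply_eq_zero_iff K]
    intro c
    rw [map_sub, main a b c, h0, map_zero]
  · -- Rota–Baxter identity → AY(r⊗r) = 0
    intro h
    have hz : ∀ a b c : Module.Dual K A,
        TensorProduct.dualDistrib K (A ⊗[K] A) A
          (TensorProduct.dualDistrib K A A (a ⊗ₜ b) ⊗ₜ c) (AY (r ⊗ₜ r)) = 0 := by
      intro a b c
      rw [← main a b c, h a b, sub_self]
    rw [← Module.forall_dual_apply_eq_zero_iff K]
    intro ψ
    obtain ⟨χ, rfl⟩ := (TensorProduct.dualDistribEquiv K (A ⊗[K] A) A).surjective ψ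
    have hcoe : ∀ χ' : Module.Dual K (A ⊗[K] A) ⊗[K] Module.Dual K A,
        (TensorProduct.dualDistribEquiv K (A ⊗[K] A) A) χ'
          = TensorProduct.dualDistrib K (A ⊗[K] A) A χ' := fun _ => rfl
    rw [hcoe]
    induction χ using TensorProduct.induction_on with
    | zero => simp
    | add χ₁ χ₂ h₁ h₂ => rw [map_add, LinearMap.add_apply, h₁, h₂, add_zero]
    | tmul φ c =>
      obtain ⟨ξ, rfl⟩ := (TensorProduct.dualDistribEquiv K A A).surjective φ
      have hcoe2 : ∀ ξ' : Module.Dual K A ⊗[K] Module.Dual K A,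
          (TensorProduct.dualDistribEquiv K A A) ξ'
            = TensorProduct.dualDistrib K A A ξ' := fun _ => rfl
      rw [hcoe2]
      induction ξ using TensorProduct.induction_on with
      | zero => simp
      | add ξ₁ ξ₂ h₁ h₂ =>
        rw [map_add, add_tmul, map_add, LinearMap.add_apply, h₁, h₂, add_zero]
      | tmul a b => exact hz a b c
end
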